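/- arXiv:1512.03794 — 4 statements merged into one kernel-verified Lean document; each statement's English description precedes it below -/
import Mathlib

section
/- Let n ≥ 3 be an odd integer, α = π/n, A(z) = -1 + e^{iα}(z+1), B(z) = 1 + e^{iα}(z-1). Then (B ∘ A)^{(n-1)/2}(1) = -1. That is, after (n-1)/2 applications of the composite rotation, the point q = 1 is mapped to p = -1. -/
open Complex Real

theorem odd_wedge_q_maps_to_p (n : ℕ) (hn : 3 ≤ n) (hodd : Odd n) (α : ℝ) (hα : α = π / n)
    (A B : ℂ → ℂ)
    (hA : ∀ z, A z = -1 + Complex.exp (α * Complex.I) * (z + 1))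
    (hB : ∀ z, B z = 1 + Complex.exp (α * Complex.I) * (z - 1)) :
    (B ∘ A)^[(n - 1) / 2] 1 = -1 := by
  set ω : ℂ := Complex.exp (α * Complex.I) with hω
  have hstep : ∀ z, (B ∘ A) z = ω ^ 2 * z + (ω - 1) ^ 2 := by
    intro z
    simp only [Function.comp_apply, hA z, hB]
    ring
  have key : ∀ k, (ω + 1) * ((B ∘ A)^[k] 1) = 2 * ω ^ (2 * k + 1) - ω + 1 := by
    intro k
    induction k with
    | zero => simp; ring
    | succ k ih =>
      rw [Function.iterate_succ_apply', hstep]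
      have h2 : 2 * (k + 1) + 1 = (2 * k + 1) + 2 := by ring
      rw [h2, pow_add]
      linear_combination ω ^ 2 * ih
  obtain ⟨m, hm⟩ := hodd
  have hm' : (n - 1) / 2 = m := by omega
  have hn0 : (n : ℂ) ≠ 0 := by
    exact_mod_cast Nat.cast_ne_zero.mpr (by omega : n ≠ 0)
  have hωn : ω ^ n = -1 := by
    rw [hω, ← Complex.exp_nat_mul]
    have : (n : ℂ) * (↑α * Complex.I) = ↑π * Complex.I := by
      rw [hα]
      push_cast
      field_simp
    rw [this, Complex.exp_pi_mul_I]
  have hne : ω + 1 ≠ 0 := by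
    intro h
    have him : ω.im = 0 := by
      have : ω = -1 := by linear_combination h
      rw [this]; simp
    rw [hω, Complex.exp_ofReal_mul_I_im] at him
    have hαpos : 0 < α := by
      rw [hα]; positivity
    have hαlt : α < π := by
      rw [hα]
      have : (1 : ℝ) < n := by exact_mod_cast by omega
      calc π / n < π / 1 := by
            apply div_lt_div_of_pos_left Real.pi_pos (by norm_num) this
        _ = π := by ring
    exact absurd him (ne_of_gt (Real.sin_pos_of_pos_of_lt_pi hαpos hαlt))
  have hkey := key ((n - 1) / 2)
  rw [hm'] at hkey
  have h2m : 2 * m + 1 = n := by omega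
  rw [h2m, hωn] at hkey
  have : (ω + 1) * ((B ∘ A)^[m] 1) = (ω + 1) * (-1) := by
    rw [hkey]; ring
  rw [hm']
  exact mul_left_cancel₀ hne this
end

section
/- Let n ≥ 3 be an even integer, α = π/n, A(z) = -1 + e^{iα}(z+1), B(z) = 1 + e^{iα}(z-1). Then there is no integer j ≥ 0 with (B ∘ A)^j(1) = -1. -/
/-!
Writing ω = e^{iα}, the composite B ∘ A is z ↦ ω² z + (1 - ω)², a rotation by 2α about
c = (1 - ω)/(1 + ω). Following the orbit of 1 gives (1 + ω)(B ∘ A)^[j] 1 = 2ω^{2j+1} + 1 - ω,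
so (B ∘ A)^[j] 1 = -1 forces ω^{2j+1} = -1. But ω is a primitive 2n-th root of unity, so
ω^m = -1 means 2n ∣ 2m, i.e. n ∣ m, and for even n this rules out odd m.
-/

open Complex Real

theorem IsPrimitiveRoot.pow_ne_neg_one_of_even {M : Type*} [CommMonoid M] [HasDistribNeg M]
    {ζ : M} {n m : ℕ} (hζ : IsPrimitiveRoot ζ (2 * n)) (hn : Even n) (hm : Odd m) :
    ζ ^ m ≠ -1 := by
  intro h
  have hdvd : 2 * n ∣ 2 * m := hζ.dvd_of_pow_eq_one _ (by rw [pow_mul', h, neg_one_sq])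
  exact hm.not_two_dvd_nat (hn.two_dvd.trans (Nat.dvd_of_mul_dvd_mul_left two_pos hdvd))

-- `(1 + ω) z - (1 - ω)` is `(1 + ω)` times the displacement of `z` from the fixed point of `f`,
-- so it is multiplied by `ω²` at each step.
theorem one_add_mul_iterate_one_eq {R : Type*} [CommRing R] {ω : R} {f : R → R}
    (hf : ∀ z, f z = ω ^ 2 * z + (1 - ω) ^ 2) (m : ℕ) :
    (1 + ω) * f^[m] 1 = 2 * ω ^ (2 * m + 1) + (1 - ω) := by
  induction m with
  | zero => simp only [Function.iterate_zero_apply]; ring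
  | succ k ih =>
    rw [Function.iterate_succ_apply', hf]
    linear_combination ω ^ 2 * ih

theorem even_wedge_q_never_maps_to_p (n : ℕ) (hn : 3 ≤ n) (heven : Even n) (α : ℝ)
    (hα : α = π / n)
    (A B : ℂ → ℂ)
    (hA : ∀ z, A z = -1 + Complex.exp (α * Complex.I) * (z + 1))
    (hB : ∀ z, B z = 1 + Complex.exp (α * Complex.I) * (z - 1)) :
    ¬ ∃ j : ℕ, (B ∘ A)^[j] 1 = -1 := by
  rintro ⟨j, hj⟩
  set ω := Complex.exp (α * Complex.I)
  have hBA : ∀ z, (B ∘ A) z = ω ^ 2 * z + (1 - ω) ^ 2 := fun z => by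
    simp only [Function.comp_apply, hA, hB]
    ring
  have hpow : ω ^ (2 * j + 1) = -1 := by
    have horbit := one_add_mul_iterate_one_eq hBA j
    rw [hj] at horbit
    linear_combination (-1 / 2 : ℂ) * horbit
  have hprim : IsPrimitiveRoot ω (2 * n) := by
    convert Complex.isPrimitiveRoot_exp (2 * n) (by omega) using 2
    rw [hα]
    push_cast
    ring
  exact hprim.pow_ne_neg_one_of_even heven (odd_two_mul_add_one j) hpow
end

section
/- Define |C_{n,k}| = 2·Σ_{i=0}^{2n} N_{i,(2n-i)k} for integers n ≥ 3 odd and k ≥ 2, where N_{a,b} is the binary necklace number (with the convention N_{0,b} = 1 and N_{a,0} = 1). Then for n = 3: |C_{3,k}| = (1/60)k⁴ + (5/6)k³ + (67/12)k² + (61/6)k + 57/5 + [1 if 2|k] + [8/5 if 5|k]. -/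
/-!
Burnside's lemma for the rotations of `Fin (a + b)` acting on colourings with `a` black beads:
a rotation `r` of order `e` fixes exactly the colourings that are constant on the cosets of `⟨r⟩`,
that is `C((a + b) / e, a / e)` of them if `e ∣ a` and none otherwise. A cyclic group of order `n`
has `φ e` elements of order `e` for every `e ∣ n`, whence
`(a + b) · N_{a,b} = ∑_{e ∣ gcd(a, b)} φ(e) C((a + b) / e, a / e)`.
In `C_{3,k}` only `gcd(4, 2k)` and `gcd(5, k)` depend on `k`; they produce the two divisibility
corrections, and every other necklace number is a polynomial in `k`.
-/

open Finset

/-- The rotation relation on colourings of `Fin (a + b)` by `Bool`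
(`true` = black, `false` = red) with exactly `a` black beads. -/
def necklaceRel (a b : ℕ)
    (f g : {f : Fin (a + b) → Bool // (Finset.univ.filter fun i => f i = true).card = a}) :
    Prop :=
  ∃ r : Fin (a + b), ∀ i, g.1 i = f.1 (i + r)

/-- The number of necklaces with `a` black and `b` red beads. -/
noncomputable def necklaceNum (a b : ℕ) : ℕ :=
  Nat.card (Quot (necklaceRel a b))


/-- The number of tilings in the family `C_{n,k}^t`. -/
noncomputable def Cnk (n k : ℕ) : ℕ :=
  2 * ∑ i ∈ Finset.range (2 * n + 1), necklaceNum i ((2 * n - i) * k)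

open scoped Nat

lemma card_boolFun_card_filter_eq_choose (α : Type*) [Fintype α] (k : ℕ) :
    Nat.card {g : α → Bool // #{q | g q = true} = k} = (Fintype.card α).choose k := by
  classical
  let e : (α → Bool) ≃ Finset α :=
    { toFun g := {q | g q = true}
      invFun s q := decide (q ∈ s)
      left_inv g := by ext; simp
      right_inv s := by ext; simp }
  rw [← Fintype.card_finset_len, ← Nat.card_eq_fintype_card]
  exact Nat.card_congr (e.subtypeEquiv fun _ => Iff.rfl)

instance (n : ℕ) [NeZero n] : IsAddCyclic (Fin n) := by
  -- `Fin (m + 1)` is `ZMod (m + 1)` by definition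
  obtain ⟨m, rfl⟩ := Nat.exists_eq_succ_of_ne_zero (NeZero.ne n)
  exact ZMod.instIsAddCyclic (m + 1)

section Coloring

variable {G : Type*} [AddCommGroup G] [Fintype G]

variable (G) in
abbrev Coloring (a : ℕ) := {f : G → Bool // #{i | f i = true} = a}

lemma card_filter_comp_add_right (f : G → Bool) (r : G) :
    #{i | f (i + r) = true} = #{i | f i = true} :=
  card_equiv (Equiv.addRight r) (by simp)

lemma card_filter_comp_mk {H : AddSubgroup G} [Fintype (G ⧸ H)] (g : G ⧸ H → Bool) :
    #{i : G | g i = true} = #{q | g q = true} * Nat.card H := by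
  classical
  have := Nat.card_congr (QuotientAddGroup.preimageMkEquivAddSubgroupProdSet H {q | g q = true})
  rw [Nat.card_prod, mul_comm] at this
  simpa only [Nat.card_eq_fintype_card, Fintype.card_subtype, Set.mem_preimage,
    Set.mem_ofPred_eq] using this

instance (a : ℕ) : AddAction G (Coloring G a) where
  vadd r f := ⟨fun i => f.1 (i + r), (card_filter_comp_add_right f.1 r).trans f.2⟩
  zero_vadd f := Subtype.ext <| funext fun i => congrArg f.1 (add_zero i)
  add_vadd r s f := Subtype.ext <| funext fun i => congrArg f.1 (by abel)

@[simp]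
lemma Coloring.vadd_apply {a : ℕ} (r : G) (f : Coloring G a) (i : G) :
    (r +ᵥ f).1 i = f.1 (i + r) := rfl

lemma Coloring.le_stabilizer_iff {a : ℕ} {H : AddSubgroup G} {f : Coloring G a} :
    H ≤ AddAction.stabilizer G f ↔ ∀ h ∈ H, ∀ i, f.1 (i + h) = f.1 i := by
  simp only [SetLike.le_def, AddAction.mem_stabilizer_iff, Subtype.ext_iff, funext_iff]
  rfl

lemma card_coloring_le_stabilizer (H : AddSubgroup G) (a : ℕ) :
    Nat.card {f : Coloring G a // H ≤ AddAction.stabilizer G f} =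
      if Nat.card H ∣ a then (Nat.card (G ⧸ H)).choose (a / Nat.card H) else 0 := by
  classical
  let E : {f : Coloring G a // H ≤ AddAction.stabilizer G f} ≃
      {g : G ⧸ H → Bool // #{q | g q = true} * Nat.card H = a} :=
    { toFun f := ⟨Quotient.lift (s := QuotientAddGroup.leftRel H) f.1.1 fun x y hxy => by
          replace hxy : -x + y ∈ H := QuotientAddGroup.leftRel_apply.mp hxy
          rw [← Coloring.le_stabilizer_iff.mp f.2 _ hxy x, add_neg_cancel_left],
        (card_filter_comp_mk _).symm.trans f.1.2⟩
      invFun g := ⟨⟨fun i => g.1 i, by rw [card_filter_comp_mk, g.2]⟩,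
        Coloring.le_stabilizer_iff.mpr fun h hh i => by
          simp only [QuotientAddGroup.mk_add, (QuotientAddGroup.eq_zero_iff h).mpr hh, add_zero]⟩
      left_inv f := rfl
      right_inv g := by ext q; induction q using QuotientAddGroup.induction_on; rfl }
  rw [Nat.card_congr E]
  split_ifs with hdvd
  · rw [Nat.card_eq_fintype_card (α := G ⧸ H), ← card_boolFun_card_filter_eq_choose]
    exact Nat.card_congr <| Equiv.subtypeEquivRight fun g =>
      eq_comm.trans (Nat.eq_div_iff_mul_eq_left Nat.card_pos.ne' hdvd).symm
  · exact Nat.card_eq_zero.mpr <| .inl ⟨fun g => hdvd ⟨_, by rw [← g.2, mul_comm]⟩⟩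

lemma card_fixedBy_coloring (r : G) (a : ℕ) :
    Nat.card (AddAction.fixedBy (Coloring G a) r) =
      if addOrderOf r ∣ a then (Nat.card G / addOrderOf r).choose (a / addOrderOf r) else 0 := by
  have hfix : ∀ f : Coloring G a, f ∈ AddAction.fixedBy (Coloring G a) r ↔
      AddSubgroup.zmultiples r ≤ AddAction.stabilizer G f :=
    fun f => by rw [AddSubgroup.zmultiples_le]; rfl
  have hquot : Nat.card (G ⧸ AddSubgroup.zmultiples r) = Nat.card G / addOrderOf r := by
    rw [AddSubgroup.card_eq_card_quotient_mul_card_addSubgroup (AddSubgroup.zmultiples r),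
      Nat.card_zmultiples, Nat.mul_div_cancel _ (addOrderOf_pos r)]
  rw [Nat.card_congr (Equiv.subtypeEquivRight hfix), card_coloring_le_stabilizer,
    Nat.card_zmultiples, hquot]

lemma IsAddCyclic.sum_comp_addOrderOf [IsAddCyclic G] (F : ℕ → ℕ) :
    ∑ r : G, F (addOrderOf r) = ∑ e ∈ (Nat.card G).divisors, φ e * F e := by
  classical
  rw [← Finset.sum_fiberwise_of_maps_to (g := addOrderOf) (t := (Nat.card G).divisors)
    fun r _ => Nat.mem_divisors.mpr ⟨addOrderOf_dvd_natCard r, Nat.card_pos.ne'⟩]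
  refine Finset.sum_congr rfl fun e he => ?_
  rw [Finset.sum_congr rfl fun r hr => congrArg F (Finset.mem_filter.mp hr).2, Finset.sum_const,
    smul_eq_mul, IsAddCyclic.card_addOrderOf_eq_totient]
  rw [← Nat.card_eq_fintype_card]
  exact Nat.dvd_of_mem_divisors he

theorem card_orbits_coloring_mul_card [IsAddCyclic G] (a : ℕ) :
    Nat.card (AddAction.orbitRel.Quotient G (Coloring G a)) * Nat.card G =
      ∑ e ∈ (Nat.card G).divisors with e ∣ a, φ e * (Nat.card G / e).choose (a / e) := by
  classical
  have burnside := AddAction.sum_card_fixedBy_eq_card_orbits_mul_card_addGroup G (Coloring G a)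
  simp only [← Nat.card_eq_fintype_card, card_fixedBy_coloring] at burnside
  rw [← burnside, IsAddCyclic.sum_comp_addOrderOf fun e =>
    if e ∣ a then (Nat.card G / e).choose (a / e) else 0, Finset.sum_filter]
  simp only [mul_ite, mul_zero]

end Coloring

lemma necklaceNum_eq_card_orbits (a b : ℕ) [NeZero (a + b)] :
    necklaceNum a b =
      Nat.card (AddAction.orbitRel.Quotient (Fin (a + b)) (Coloring (Fin (a + b)) a)) :=
  Nat.card_congr <| Quot.congrRight fun f g => by
    refine ⟨fun ⟨r, hr⟩ => ⟨-r, Subtype.ext <| funext fun i => ?_⟩,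
      fun ⟨r, hr⟩ => ⟨-r, fun i => ?_⟩⟩
    · simp [hr]
    · simp [← hr]

theorem necklaceNum_mul_add (a b : ℕ) :
    necklaceNum a b * (a + b) = ∑ e ∈ (a.gcd b).divisors, φ e * ((a + b) / e).choose (a / e) := by
  rcases Nat.eq_zero_or_pos (a + b) with hab | hab
  · obtain ⟨rfl, rfl⟩ : a = 0 ∧ b = 0 := by omega
    simp
  have : NeZero (a + b) := ⟨hab.ne'⟩
  have hdiv : {e ∈ (a + b).divisors | e ∣ a} = (a.gcd b).divisors := by
    ext e
    simp only [Finset.mem_filter, Nat.mem_divisors, Nat.dvd_gcd_iff, ne_eq, Nat.gcd_eq_zero_iff]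
    constructor
    · rintro ⟨⟨hn, -⟩, ha⟩
      exact ⟨⟨ha, (Nat.dvd_add_right ha).mp hn⟩, by omega⟩
    · rintro ⟨⟨ha, hb⟩, -⟩
      exact ⟨⟨Nat.dvd_add ha hb, by omega⟩, ha⟩
  have := card_orbits_coloring_mul_card (G := Fin (a + b)) a
  rwa [Nat.card_fin, hdiv, ← necklaceNum_eq_card_orbits] at this

lemma necklaceNum_zero_left (b : ℕ) : necklaceNum 0 b = 1 := by
  have hnone (f : {f : Fin (0 + b) → Bool // #{i | f i = true} = 0}) : f.1 = fun _ => false := by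
    funext i
    simpa using card_filter_eq_zero_iff.mp f.2 i
  have : Subsingleton {f : Fin (0 + b) → Bool // #{i | f i = true} = 0} :=
    ⟨fun f g => Subtype.ext <| (hnone f).trans (hnone g).symm⟩
  exact Nat.card_eq_one_iff_unique.mpr ⟨inferInstance, ⟨Quot.mk _ ⟨fun _ => false, by simp⟩⟩⟩

lemma necklaceNum_zero_right (a : ℕ) : necklaceNum a 0 = 1 := by
  have hall (f : {f : Fin (a + 0) → Bool // #{i | f i = true} = a}) : f.1 = fun _ => true := by
    funext i
    simpa using card_filter_eq_iff.mp (f.2.trans (by simp)) i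
  have : Subsingleton {f : Fin (a + 0) → Bool // #{i | f i = true} = a} :=
    ⟨fun f g => Subtype.ext <| (hall f).trans (hall g).symm⟩
  exact Nat.card_eq_one_iff_unique.mpr ⟨inferInstance, ⟨Quot.mk _ ⟨fun _ => true, by simp⟩⟩⟩

lemma necklaceNum_one_left (b : ℕ) : necklaceNum 1 b = 1 := by
  have h := necklaceNum_mul_add 1 b
  simp only [Nat.gcd_one_left, Nat.divisors_one, sum_singleton, Nat.totient_one, Nat.div_one,
    Nat.choose_one_right, one_mul] at h
  exact (Nat.mul_eq_right (by omega)).mp h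

lemma necklaceNum_prime_mul_add {p : ℕ} (hp : p.Prime) (b : ℕ) :
    necklaceNum p b * (p + b) =
      (p + b).choose p + if p ∣ b then (p - 1) * (b / p + 1) else 0 := by
  rw [necklaceNum_mul_add]
  split_ifs with hpb
  · rw [Nat.gcd_eq_left hpb, hp.divisors, sum_pair hp.one_lt.ne, Nat.totient_one, Nat.div_one,
      Nat.div_one, one_mul, Nat.totient_prime hp, Nat.div_self hp.pos, Nat.choose_one_right,
      Nat.add_div_left _ hp.pos]
  · rw [Nat.Coprime.gcd_eq_one ((Nat.Prime.coprime_iff_not_dvd hp).mpr hpb), Nat.divisors_one,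
      sum_singleton, Nat.totient_one, Nat.div_one, Nat.div_one, one_mul, add_zero]

lemma necklaceNum_four_two_mul_mul_add (k : ℕ) :
    necklaceNum 4 (2 * k) * (4 + 2 * k) =
      (4 + 2 * k).choose 4 + (2 + k).choose 2 + if 2 ∣ k then k + 2 else 0 := by
  rw [necklaceNum_mul_add, show Nat.gcd 4 (2 * k) = 2 * Nat.gcd 2 k from Nat.gcd_mul_left 2 2 k]
  split_ifs with hk
  · obtain ⟨j, rfl⟩ := hk
    rw [Nat.gcd_eq_left (dvd_mul_right 2 j), show Nat.divisors (2 * 2) = {1, 2, 4} by decide,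
      sum_insert (by decide), sum_pair (by decide), show (4 + 2 * (2 * j)) / 2 = 2 + 2 * j by omega,
      show (4 + 2 * (2 * j)) / 4 = j + 1 by omega]
    simp only [Nat.totient_one, Nat.totient_two, show φ 4 = 2 by decide, Nat.div_one,
      Nat.reduceDiv, one_mul, Nat.choose_one_right]
    ring
  · rw [Nat.Coprime.gcd_eq_one ((Nat.Prime.coprime_iff_not_dvd Nat.prime_two).mpr hk),
      Nat.prime_two.divisors, sum_pair (by decide), show (4 + 2 * k) / 2 = 2 + k by omega]
    simp only [Nat.totient_one, Nat.totient_two, Nat.div_one, Nat.reduceDiv, one_mul, add_zero]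

lemma cast_add_choose_eq_prod_div (k n : ℕ) :
    ((k + n).choose k : ℚ) = (∏ i ∈ range k, ((n + 1 + i : ℕ) : ℚ)) / k ! := by
  rw [eq_div_iff (by positivity), add_comm]
  exact_mod_cast ((Nat.ascFactorial_eq_factorial_mul_choose n k).trans (mul_comm _ _)).symm.trans
    (Nat.ascFactorial_eq_prod_range _ _)

lemma cast_necklaceNum_two_two_mul (m : ℕ) : (necklaceNum 2 (2 * m) : ℚ) = m + 1 := by
  have h := necklaceNum_prime_mul_add Nat.prime_two (2 * m)
  rw [if_pos (dvd_mul_right 2 m), show 2 * m / 2 = m by omega, show 2 - 1 = 1 from rfl,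
    one_mul] at h
  have hq : (necklaceNum 2 (2 * m) : ℚ) * (2 + 2 * m) = ((2 + 2 * m).choose 2 : ℕ) + (m + 1) := by
    exact_mod_cast h
  simp only [cast_add_choose_eq_prod_div, prod_range_succ, prod_range_zero, Nat.factorial] at hq
  push_cast at hq
  refine mul_right_cancel₀ (show (2 + 2 * m : ℚ) ≠ 0 by positivity) (hq.trans ?_)
  ring

lemma cast_necklaceNum_three_three_mul (m : ℕ) :
    (necklaceNum 3 (3 * m) : ℚ) = (3 * m ^ 2 + 3 * m + 2) / 2 := by
  have h := necklaceNum_prime_mul_add Nat.prime_three (3 * m)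
  rw [if_pos (dvd_mul_right 3 m), show 3 * m / 3 = m by omega, show 3 - 1 = 2 from rfl] at h
  have hq : (necklaceNum 3 (3 * m) : ℚ) * (3 + 3 * m) =
      ((3 + 3 * m).choose 3 : ℕ) + 2 * (m + 1) := by
    exact_mod_cast h
  simp only [cast_add_choose_eq_prod_div, prod_range_succ, prod_range_zero, Nat.factorial] at hq
  push_cast at hq
  refine mul_right_cancel₀ (show (3 + 3 * m : ℚ) ≠ 0 by positivity) (hq.trans ?_)
  ring

lemma cast_necklaceNum_four_two_mul (k : ℕ) :
    (necklaceNum 4 (2 * k) : ℚ) = (2 * k + 3) * (2 * k + 2) * (2 * k + 1) / 24 + (k + 1) / 4 +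
      if 2 ∣ k then 1 / 2 else 0 := by
  have hq : (necklaceNum 4 (2 * k) : ℚ) * (4 + 2 * k) = ((4 + 2 * k).choose 4 : ℕ) +
      ((2 + k).choose 2 : ℕ) + if 2 ∣ k then (k : ℚ) + 2 else 0 := by
    exact_mod_cast necklaceNum_four_two_mul_mul_add k
  simp only [cast_add_choose_eq_prod_div, prod_range_succ, prod_range_zero, Nat.factorial] at hq
  push_cast at hq
  refine mul_right_cancel₀ (show (4 + 2 * k : ℚ) ≠ 0 by positivity) (hq.trans ?_)
  split_ifs <;> ring

lemma cast_necklaceNum_five_left (k : ℕ) :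
    (necklaceNum 5 k : ℚ) = (k + 4) * (k + 3) * (k + 2) * (k + 1) / 120 +
      if 5 ∣ k then 4 / 5 else 0 := by
  have h := necklaceNum_prime_mul_add Nat.prime_five k
  have hq : (necklaceNum 5 k : ℚ) * (5 + k) = ((5 + k).choose 5 : ℕ) +
      if 5 ∣ k then 4 * ((k : ℚ) / 5 + 1) else 0 := by
    split_ifs at h ⊢ with h5
    · have hdiv := Nat.cast_div_charZero (K := ℚ) h5
      push_cast at hdiv
      rw [← hdiv]
      exact_mod_cast h
    · exact_mod_cast h
  simp only [cast_add_choose_eq_prod_div, prod_range_succ, prod_range_zero, Nat.factorial] at hq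
  push_cast at hq
  refine mul_right_cancel₀ (show (5 + k : ℚ) ≠ 0 by positivity) (hq.trans ?_)
  split_ifs <;> ring

theorem Cnk_three_closed_form_general (k : ℕ) :
    (Cnk 3 k : ℚ) =
      (1 / 60) * (k : ℚ) ^ 4 + (5 / 6) * (k : ℚ) ^ 3 + (67 / 12) * (k : ℚ) ^ 2 +
        (61 / 6) * (k : ℚ) + 57 / 5 +
        (if 2 ∣ k then (1 : ℚ) else 0) + (if 5 ∣ k then (8 / 5 : ℚ) else 0) := by
  have hCnk : Cnk 3 k = 2 * (necklaceNum 0 (6 * k) + necklaceNum 1 (5 * k) +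
      necklaceNum 2 (4 * k) + necklaceNum 3 (3 * k) + necklaceNum 4 (2 * k) + necklaceNum 5 k +
      necklaceNum 6 0) := by
    simp [Cnk, sum_range_succ]
  rw [hCnk, necklaceNum_zero_left, necklaceNum_one_left, necklaceNum_zero_right,
    show 4 * k = 2 * (2 * k) by ring]
  push_cast
  rw [cast_necklaceNum_two_two_mul, cast_necklaceNum_three_three_mul,
    cast_necklaceNum_four_two_mul, cast_necklaceNum_five_left]
  push_cast
  split_ifs <;> ring

theorem Cnk_three_closed_form (k : ℕ) (hk : 2 ≤ k) :
    (Cnk 3 k : ℚ) =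
      (1 / 60) * (k : ℚ) ^ 4 + (5 / 6) * (k : ℚ) ^ 3 + (67 / 12) * (k : ℚ) ^ 2 +
        (61 / 6) * (k : ℚ) + 57 / 5 +
        (if 2 ∣ k then (1 : ℚ) else 0) + (if 5 ∣ k then (8 / 5 : ℚ) else 0) :=
  Cnk_three_closed_form_general k
end

section
/- Let α, β ∈ (0, π) with A(z) = -1 + e^{iα}(z+1), B(z) = 1 + e^{iβ}(z-1), and suppose α + β < 2π. Let c₊ be the fixed point of B∘A and c₋ the fixed point of A∘B. If Re(c₊) = 0 and Re(c₋) = 0, then α = β. -/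
open Complex Real

theorem equal_angles_of_imaginary_fixed_points (α β : ℝ)
    (hα : α ∈ Set.Ioo 0 π) (hβ : β ∈ Set.Ioo 0 π) (hsum : α + β < 2 * π)
    (A B : ℂ → ℂ)
    (hA : ∀ z, A z = -1 + Complex.exp (α * Complex.I) * (z + 1))
    (hB : ∀ z, B z = 1 + Complex.exp (β * Complex.I) * (z - 1))
    (cp cm : ℂ) (hcp : B (A cp) = cp) (hcm : A (B cm) = cm)
    (hrep : cp.re = 0) (hrem : cm.re = 0) :
    α = β := by
  rw [hA, hB] at hcp
  rw [Complex.exp_mul_I, Complex.exp_mul_I] at hcp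
  rw [← Complex.ofReal_cos, ← Complex.ofReal_sin, ← Complex.ofReal_cos, ← Complex.ofReal_sin] at hcp
  rw [Complex.ext_iff] at hcp
  simp only [Complex.add_re, Complex.add_im, Complex.sub_re, Complex.sub_im,
    Complex.mul_re, Complex.mul_im,
    Complex.one_re, Complex.one_im, Complex.neg_re, Complex.neg_im,
    Complex.ofReal_re, Complex.ofReal_im, Complex.I_re, Complex.I_im, hrep] at hcp
  obtain ⟨h1, h2⟩ := hcp
  have pa := Real.sin_sq_add_cos_sq α
  have pb := Real.sin_sq_add_cos_sq β
  have hcc : Real.cos α = Real.cos β := by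
    linear_combination ((1 - (Real.cos α * Real.cos β - Real.sin α * Real.sin β))/2) * h1
      - ((Real.sin α * Real.cos β + Real.cos α * Real.sin β)/2) * h2
      + (1/2 - Real.cos α) * pb + ((Real.cos β^2 + Real.sin β^2)/2) * pa
  exact Real.injOn_cos ⟨le_of_lt hα.1, le_of_lt hα.2⟩ ⟨le_of_lt hβ.1, le_of_lt hβ.2⟩ hcc
end
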